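/- arXiv:2509.19683 — 5 statements merged into one kernel-verified Lean document; each statement's English description precedes it below -/
import Mathlib

section
/- Let m_h denote the number of minimal vertex covers of a perfect binary tree of height h. Then m_0 = 1, m_1 = 2, m_2 = 4, and for all h ≥ 2, m_{h+1} = 2·m_h·m_{h-2}^4 + m_{h-1}^4 - m_{h-2}^8. -/
/-- The perfect binary tree of height `h`, on vertex set `Fin (2^(h+1) - 1)`
with heap indexing: the children of vertex `i` are `2*i+1` and `2*i+2`. -/
def perfectBinaryTree (h : ℕ) : SimpleGraph (Fin (2 ^ (h + 1) - 1)) :=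
  SimpleGraph.fromRel (fun i j => (j : ℕ) = 2 * (i : ℕ) + 1 ∨ (j : ℕ) = 2 * (i : ℕ) + 2)

/-- The height of a vertex (in heap indexing) is `log₂ (v+1)`. -/
def heapHeight {n : ℕ} (v : Fin n) : ℕ := Nat.log 2 ((v : ℕ) + 1)

variable {V : Type*}

/-- A vertex cover of a graph: a set of vertices meeting every edge. -/
def SimpleGraph.IsVertexCover' (G : SimpleGraph V) (C : Finset V) : Prop :=
  ∀ ⦃u v : V⦄, G.Adj u v → u ∈ C ∨ v ∈ C

/-- A minimal vertex cover: no proper subset is a vertex cover. -/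
def SimpleGraph.IsMinimalVertexCover (G : SimpleGraph V) (C : Finset V) : Prop :=
  G.IsVertexCover' C ∧ ∀ D : Finset V, D ⊂ C → ¬ G.IsVertexCover' D

/-- The number of minimal vertex covers of a graph. -/
noncomputable def SimpleGraph.numMinimalVertexCovers (G : SimpleGraph V) : ℕ :=
  {C : Finset V | G.IsMinimalVertexCover C}.ncard

/-- The vertex cover number: smallest cardinality of a vertex cover. -/
noncomputable def SimpleGraph.vertexCoverNumber (G : SimpleGraph V) : ℕ :=
  sInf {k | ∃ C : Finset V, G.IsVertexCover' C ∧ C.card = k}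

/-- An independent set: no two of its vertices are adjacent. -/
def SimpleGraph.IsIndepSet' (G : SimpleGraph V) (W : Finset V) : Prop :=
  ∀ u ∈ W, ∀ v ∈ W, ¬ G.Adj u v

/-- A maximal independent set. -/
def SimpleGraph.IsMaximalIndepSet (G : SimpleGraph V) (W : Finset V) : Prop :=
  G.IsIndepSet' W ∧ ∀ D : Finset V, W ⊂ D → ¬ G.IsIndepSet' D

/-- The independence number: largest cardinality of an independent set. -/
noncomputable def SimpleGraph.indepNumber (G : SimpleGraph V) : ℕ :=
  sSup {k | ∃ W : Finset V, G.IsIndepSet' W ∧ W.card = k}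

/-- The minimum size of a maximal independent set. -/
noncomputable def SimpleGraph.minMaximalIndepSetSize (G : SimpleGraph V) : ℕ :=
  sInf {k | ∃ W : Finset V, G.IsMaximalIndepSet W ∧ W.card = k}

/-- The matching number: largest cardinality of a set of pairwise disjoint edges. -/
noncomputable def SimpleGraph.matchingNumber (G : SimpleGraph V) : ℕ :=
  sSup {k | ∃ M : Finset (Sym2 V), (↑M : Set (Sym2 V)) ⊆ G.edgeSet ∧
    ((↑M : Set (Sym2 V)).Pairwise fun e f => ∀ v : V, v ∈ e → v ∉ f) ∧ M.card = k}

/-!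
Minimal vertex covers are the complements of maximal independent sets, so we count the latter.
The perfect binary tree of height `h + 1` is a new root joined to the roots of two copies of the
tree of height `h`. Let `m h` count its maximal independent sets, `b h` those avoiding the root,
and `d h` the maximal independent sets of the tree with its root deleted. A maximal independent
set containing the new root restricts to maximal independent sets of both subtrees minus their
roots; one avoiding it restricts to maximal independent sets of both subtrees, at least one of
which contains its root. Hence
  `m (h + 1) = d h ^ 2 + b (h + 1)`, `b (h + 1) = m h ^ 2 - b h ^ 2`, `d (h + 1) = m h ^ 2`,
and eliminating `b` and `d` gives the recurrence.
-/

namespace Finset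

variable {X α β : Type*}

lemma ncard_setOf_none_mem_eraseNone (P : Finset X → Prop) :
    {S : Finset (Option X) | none ∈ S ∧ P S.eraseNone}.ncard = {s | P s}.ncard := by
  classical
  rw [← Set.ncard_image_of_injective {s | P s} insertNone.injective]
  refine congrArg Set.ncard (Set.ext fun S => ?_)
  simp only [Set.mem_ofPred_eq, Set.mem_image]
  constructor
  · rintro ⟨hS, hP⟩
    exact ⟨S.eraseNone, hP, by simp [insert_eq_of_mem hS]⟩
  · rintro ⟨s, hs, rfl⟩
    simpa using hs

lemma ncard_setOf_none_notMem_eraseNone (P : Finset X → Prop) :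
    {S : Finset (Option X) | none ∉ S ∧ P S.eraseNone}.ncard = {s | P s}.ncard := by
  classical
  rw [← Set.ncard_image_of_injective {s | P s} (map_injective Function.Embedding.some)]
  refine congrArg Set.ncard (Set.ext fun S => ?_)
  simp only [Set.mem_ofPred_eq, Set.mem_image]
  constructor
  · rintro ⟨hS, hP⟩
    exact ⟨S.eraseNone, hP, by simp [erase_eq_of_notMem hS]⟩
  · rintro ⟨s, hs, rfl⟩
    simpa using hs

lemma ncard_setOf_toLeft_toRight (P : Finset α → Prop) (Q : Finset β → Prop) :
    {s : Finset (α ⊕ β) | P s.toLeft ∧ Q s.toRight}.ncard =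
      {s | P s}.ncard * {t | Q t}.ncard := by
  rw [← Set.ncard_prod]
  exact Set.ncard_preimage_of_injective_subset_range (s := {s | P s} ×ˢ {t | Q t})
    sumEquiv.injective (by simp [sumEquiv.surjective.range_eq])

lemma ncard_setOf_none_mem_toLeft_toRight (P : Finset α → Prop) (Q : Finset β → Prop) :
    {S : Finset (Option (α ⊕ β)) |
        none ∈ S ∧ P S.eraseNone.toLeft ∧ Q S.eraseNone.toRight}.ncard =
      {s | P s}.ncard * {t | Q t}.ncard :=
  (ncard_setOf_none_mem_eraseNone fun u => P u.toLeft ∧ Q u.toRight).trans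
    (ncard_setOf_toLeft_toRight P Q)

lemma ncard_setOf_none_notMem_toLeft_toRight (P : Finset α → Prop) (Q : Finset β → Prop) :
    {S : Finset (Option (α ⊕ β)) |
        none ∉ S ∧ P S.eraseNone.toLeft ∧ Q S.eraseNone.toRight}.ncard =
      {s | P s}.ncard * {t | Q t}.ncard :=
  (ncard_setOf_none_notMem_eraseNone fun u => P u.toLeft ∧ Q u.toRight).trans
    (ncard_setOf_toLeft_toRight P Q)

end Finset

namespace SimpleGraph

variable {W : Type*} {G : SimpleGraph V} {H : SimpleGraph W}

lemma isMaximalIndepSet_iff_forall_exists_adj {S : Finset V} :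
    G.IsMaximalIndepSet S ↔ G.IsIndepSet' S ∧ ∀ v ∉ S, ∃ u ∈ S, G.Adj u v := by
  classical
  refine and_congr_right fun hS => ⟨fun hmax v hv => ?_, fun hdom D hSD hD => ?_⟩
  · by_contra! hfree
    refine hmax (insert v S) (Finset.ssubset_insert hv) ?_
    simp only [IsIndepSet', Finset.mem_insert]
    rintro x (rfl | hx) y (rfl | hy) hxy
    · exact hxy.ne rfl
    · exact hfree y hy hxy.symm
    · exact hfree x hx hxy
    · exact hS x hx y hy hxy
  · obtain ⟨v, hvD, hvS⟩ := Finset.exists_of_ssubset hSD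
    obtain ⟨u, huS, huv⟩ := hdom v hvS
    exact hD u (hSD.subset huS) v hvD huv

/-- The maximal independent sets of `G - r`, seen as sets of vertices of `G`. -/
def IsMaximalIndepSetMinus (G : SimpleGraph V) (r : V) (S : Finset V) : Prop :=
  r ∉ S ∧ G.IsIndepSet' S ∧ ∀ v ∉ S, v ≠ r → ∃ u ∈ S, G.Adj u v

lemma isMaximalIndepSet_iff_isMaximalIndepSetMinus {r : V} {S : Finset V} (hr : r ∉ S) :
    G.IsMaximalIndepSet S ↔ G.IsMaximalIndepSetMinus r S ∧ ∃ u ∈ S, G.Adj u r := by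
  rw [isMaximalIndepSet_iff_forall_exists_adj, IsMaximalIndepSetMinus]
  refine ⟨fun ⟨hS, hdom⟩ => ⟨⟨hr, hS, fun v hv _ => hdom v hv⟩, hdom r hr⟩,
    fun ⟨⟨_, hS, hdom⟩, hdom_r⟩ => ⟨hS, fun v hv => ?_⟩⟩
  by_cases hvr : v = r
  · exact hvr ▸ hdom_r
  · exact hdom v hv hvr

noncomputable def numMaxIndepSets (G : SimpleGraph V) : ℕ :=
  {S | G.IsMaximalIndepSet S}.ncard

noncomputable def numMaxIndepSetsNotMem (G : SimpleGraph V) (r : V) : ℕ :=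
  {S | G.IsMaximalIndepSet S ∧ r ∉ S}.ncard

noncomputable def numMaxIndepSetsMinus (G : SimpleGraph V) (r : V) : ℕ :=
  {S | G.IsMaximalIndepSetMinus r S}.ncard

section VertexCover

variable [Fintype V] [DecidableEq V]

lemma isVertexCover'_iff_isIndepSet'_compl {C : Finset V} :
    G.IsVertexCover' C ↔ G.IsIndepSet' Cᶜ := by
  simp only [IsVertexCover', IsIndepSet', Finset.mem_compl]
  exact ⟨fun h u hu v hv huv => (h huv).elim hu hv,
    fun h u v huv => by by_contra! hc; exact h u hc.1 v hc.2 huv⟩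

lemma isMinimalVertexCover_iff_isMaximalIndepSet_compl {C : Finset V} :
    G.IsMinimalVertexCover C ↔ G.IsMaximalIndepSet Cᶜ := by
  rw [IsMinimalVertexCover, IsMaximalIndepSet, isVertexCover'_iff_isIndepSet'_compl]
  refine and_congr_right fun _ => ⟨fun h D hCD => ?_, fun h D hDC => ?_⟩
  · simpa [isVertexCover'_iff_isIndepSet'_compl] using
      h Dᶜ (by simpa using Finset.compl_ssubset_compl.2 hCD)
  · rw [isVertexCover'_iff_isIndepSet'_compl]
    exact h Dᶜ (Finset.compl_ssubset_compl.2 hDC)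

lemma numMinimalVertexCovers_eq_numMaxIndepSets :
    G.numMinimalVertexCovers = G.numMaxIndepSets :=
  Set.ncard_congr' <| Equiv.subtypeEquiv ⟨compl, compl, compl_compl, compl_compl⟩
    fun _ => isMinimalVertexCover_iff_isMaximalIndepSet_compl

end VertexCover

namespace Iso

lemma apply_mem_map_iff (φ : G ≃g H) {S : Finset V} {v : V} :
    φ v ∈ S.map φ.toEquiv.toEmbedding ↔ v ∈ S :=
  Finset.mem_map' φ.toEquiv.toEmbedding

lemma isIndepSet'_map_iff (φ : G ≃g H) (S : Finset V) :
    H.IsIndepSet' (S.map φ.toEquiv.toEmbedding) ↔ G.IsIndepSet' S := by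
  simp only [IsIndepSet', φ.surjective.forall, φ.apply_mem_map_iff, φ.map_adj_iff]

lemma isMaximalIndepSet_map_iff (φ : G ≃g H) (S : Finset V) :
    H.IsMaximalIndepSet (S.map φ.toEquiv.toEmbedding) ↔ G.IsMaximalIndepSet S := by
  simp only [isMaximalIndepSet_iff_forall_exists_adj, isIndepSet'_map_iff, φ.surjective.forall,
    φ.surjective.exists, φ.apply_mem_map_iff, φ.map_adj_iff]

lemma isMaximalIndepSetMinus_map_iff (φ : G ≃g H) (S : Finset V) (r : V) :
    H.IsMaximalIndepSetMinus (φ r) (S.map φ.toEquiv.toEmbedding) ↔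
      G.IsMaximalIndepSetMinus r S := by
  simp only [IsMaximalIndepSetMinus, isIndepSet'_map_iff, φ.surjective.forall,
    φ.surjective.exists, φ.apply_mem_map_iff, φ.map_adj_iff, φ.injective.ne_iff]

lemma numMaxIndepSets_eq (φ : G ≃g H) : G.numMaxIndepSets = H.numMaxIndepSets :=
  Set.ncard_congr' <| Equiv.subtypeEquiv φ.toEquiv.finsetCongr fun S =>
    (φ.isMaximalIndepSet_map_iff S).symm

lemma numMaxIndepSetsNotMem_eq (φ : G ≃g H) (r : V) :
    G.numMaxIndepSetsNotMem r = H.numMaxIndepSetsNotMem (φ r) :=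
  Set.ncard_congr' <| Equiv.subtypeEquiv φ.toEquiv.finsetCongr fun S =>
    (and_congr (φ.isMaximalIndepSet_map_iff S) (not_congr φ.apply_mem_map_iff)).symm

lemma numMaxIndepSetsMinus_eq (φ : G ≃g H) (r : V) :
    G.numMaxIndepSetsMinus r = H.numMaxIndepSetsMinus (φ r) :=
  Set.ncard_congr' <| Equiv.subtypeEquiv φ.toEquiv.finsetCongr fun S =>
    (φ.isMaximalIndepSetMinus_map_iff S r).symm

end Iso

section Subsingleton

variable [Subsingleton V]

lemma isMaximalIndepSet_iff_eq_singleton_of_subsingleton (r : V) {S : Finset V} :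
    G.IsMaximalIndepSet S ↔ S = {r} := by
  have : Nonempty V := ⟨r⟩
  simp [isMaximalIndepSet_iff_forall_exists_adj, IsIndepSet', Finset.eq_singleton_iff_unique_mem,
    Subsingleton.elim _ r]

lemma numMaxIndepSets_of_subsingleton [Nonempty V] : G.numMaxIndepSets = 1 := by
  simp [numMaxIndepSets, isMaximalIndepSet_iff_eq_singleton_of_subsingleton (Classical.arbitrary V)]

lemma numMaxIndepSetsNotMem_of_subsingleton (r : V) : G.numMaxIndepSetsNotMem r = 0 := by
  rw [numMaxIndepSetsNotMem, Set.ncard_eq_zero]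
  exact Set.eq_empty_of_forall_notMem fun _ ⟨hS, hr⟩ =>
    hr ((isMaximalIndepSet_iff_eq_singleton_of_subsingleton r).1 hS ▸ Finset.mem_singleton_self r)

lemma numMaxIndepSetsMinus_of_subsingleton (r : V) : G.numMaxIndepSetsMinus r = 1 := by
  have : Nonempty V := ⟨r⟩
  have hS : ∀ S : Finset V, G.IsMaximalIndepSetMinus r S ↔ S = ∅ := fun S => by
    simp [IsMaximalIndepSetMinus, IsIndepSet', Finset.eq_empty_iff_forall_notMem,
      Subsingleton.elim _ r]
  simp [numMaxIndepSetsMinus, hS]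

end Subsingleton

section RootJoin

variable {α β : Type*} (G : SimpleGraph α) (H : SimpleGraph β) (a : α) (b : β)

def rootJoin : SimpleGraph (Option (α ⊕ β)) where
  Adj
    | none, some (.inl x) | some (.inl x), none => x = a
    | none, some (.inr y) | some (.inr y), none => y = b
    | some (.inl x), some (.inl y) => G.Adj x y
    | some (.inr x), some (.inr y) => H.Adj x y
    | _, _ => False
  symm := ⟨by rintro (_ | x | x) (_ | y | y) h <;> simp_all [G.adj_comm, H.adj_comm]⟩
  loopless := ⟨by rintro (_ | x | x) h <;> simp_all⟩

variable {G H a b} {S : Finset (Option (α ⊕ β))}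

lemma rootJoin_isMaximalIndepSet_iff_of_none_mem (hS : none ∈ S) :
    (rootJoin G H a b).IsMaximalIndepSet S ↔
      G.IsMaximalIndepSetMinus a S.eraseNone.toLeft ∧
        H.IsMaximalIndepSetMinus b S.eraseNone.toRight := by
  simp only [isMaximalIndepSet_iff_forall_exists_adj, IsMaximalIndepSetMinus, IsIndepSet',
    Option.forall, Sum.forall, Option.exists, Sum.exists, Finset.mem_toLeft, Finset.mem_toRight,
    Finset.mem_eraseNone, rootJoin]
  grind

lemma rootJoin_isMaximalIndepSetMinus_none_iff (hS : none ∉ S) :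
    (rootJoin G H a b).IsMaximalIndepSetMinus none S ↔
      G.IsMaximalIndepSet S.eraseNone.toLeft ∧ H.IsMaximalIndepSet S.eraseNone.toRight := by
  simp only [isMaximalIndepSet_iff_forall_exists_adj, IsMaximalIndepSetMinus, IsIndepSet',
    Option.forall, Sum.forall, Option.exists, Sum.exists, Finset.mem_toLeft, Finset.mem_toRight,
    Finset.mem_eraseNone, rootJoin]
  grind

lemma rootJoin_exists_adj_none_iff :
    (∃ u ∈ S, (rootJoin G H a b).Adj u none) ↔
      a ∈ S.eraseNone.toLeft ∨ b ∈ S.eraseNone.toRight := by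
  simp [Option.exists, Sum.exists, rootJoin]

lemma rootJoin_isMaximalIndepSet_iff_of_none_notMem (hS : none ∉ S) :
    (rootJoin G H a b).IsMaximalIndepSet S ↔
      (G.IsMaximalIndepSet S.eraseNone.toLeft ∧ H.IsMaximalIndepSet S.eraseNone.toRight) ∧
        (a ∈ S.eraseNone.toLeft ∨ b ∈ S.eraseNone.toRight) := by
  rw [isMaximalIndepSet_iff_isMaximalIndepSetMinus hS,
    rootJoin_isMaximalIndepSetMinus_none_iff hS, rootJoin_exists_adj_none_iff]

variable (G H a b)

lemma numMaxIndepSets_rootJoin [Fintype α] [Fintype β] :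
    (rootJoin G H a b).numMaxIndepSets =
      G.numMaxIndepSetsMinus a * H.numMaxIndepSetsMinus b +
        (rootJoin G H a b).numMaxIndepSetsNotMem none := by
  have hsplit : {S | (rootJoin G H a b).IsMaximalIndepSet S} =
      {S | none ∈ S ∧ G.IsMaximalIndepSetMinus a S.eraseNone.toLeft ∧
          H.IsMaximalIndepSetMinus b S.eraseNone.toRight} ∪
        {S | (rootJoin G H a b).IsMaximalIndepSet S ∧ none ∉ S} := by
    ext S
    by_cases hS : none ∈ S <;> simp [hS, rootJoin_isMaximalIndepSet_iff_of_none_mem]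
  rw [numMaxIndepSets, hsplit, Set.ncard_union_eq, Finset.ncard_setOf_none_mem_toLeft_toRight]
  · rfl
  · exact Set.disjoint_left.2 fun S h h' => h'.2 h.1

lemma numMaxIndepSetsMinus_rootJoin :
    (rootJoin G H a b).numMaxIndepSetsMinus none = G.numMaxIndepSets * H.numMaxIndepSets := by
  unfold numMaxIndepSetsMinus numMaxIndepSets
  rw [← Finset.ncard_setOf_none_notMem_toLeft_toRight]
  congr 1
  ext S
  by_cases hS : none ∈ S
  · simp [hS, IsMaximalIndepSetMinus]
  · simp [hS, rootJoin_isMaximalIndepSetMinus_none_iff]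

lemma numMaxIndepSetsNotMem_rootJoin [Fintype α] [Fintype β] :
    (rootJoin G H a b).numMaxIndepSetsNotMem none +
        G.numMaxIndepSetsNotMem a * H.numMaxIndepSetsNotMem b =
      G.numMaxIndepSets * H.numMaxIndepSets := by
  have hsplit : {S | none ∉ S ∧ G.IsMaximalIndepSet S.eraseNone.toLeft ∧
        H.IsMaximalIndepSet S.eraseNone.toRight} =
      {S | (rootJoin G H a b).IsMaximalIndepSet S ∧ none ∉ S} ∪
        {S | none ∉ S ∧
          (G.IsMaximalIndepSet S.eraseNone.toLeft ∧ a ∉ S.eraseNone.toLeft) ∧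
          (H.IsMaximalIndepSet S.eraseNone.toRight ∧ b ∉ S.eraseNone.toRight)} := by
    ext S
    by_cases hS : none ∈ S
    · simp [hS]
    · simp only [Set.mem_ofPred_eq, Set.mem_union,
        rootJoin_isMaximalIndepSet_iff_of_none_notMem hS]
      tauto
  unfold numMaxIndepSetsNotMem numMaxIndepSets
  rw [← Finset.ncard_setOf_none_notMem_toLeft_toRight,
    ← Finset.ncard_setOf_none_notMem_toLeft_toRight, hsplit, Set.ncard_union_eq]
  exact Set.disjoint_left.2 fun S h h' =>
    ((rootJoin_isMaximalIndepSet_iff_of_none_notMem h'.1).1 h.1).2.elim h'.2.1.2 h'.2.2.2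

end RootJoin

end SimpleGraph

namespace PerfectBinaryTree

open SimpleGraph

/-- The heap index, in the tree of height `h + 1`, of the vertex with heap index `v` in the left
(`c = false`) or right (`c = true`) subtree: it inserts the bit `c` after the leading bit of
`v + 1`. -/
def graft (c : Bool) (v : ℕ) : ℕ := v + (c.toNat + 1) * 2 ^ Nat.log 2 (v + 1)

lemma graft_zero (c : Bool) : graft c 0 = c.toNat + 1 := by simp [graft]

lemma graft_pos (c : Bool) (v : ℕ) : 0 < graft c v := by
  have := Nat.one_le_two_pow (n := Nat.log 2 (v + 1))
  unfold graft; positivity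

lemma log_graft (c : Bool) (v : ℕ) : Nat.log 2 (graft c v + 1) = Nat.log 2 (v + 1) + 1 := by
  have hlo := Nat.pow_log_le_self 2 (Nat.succ_ne_zero v)
  have hhi := Nat.lt_pow_succ_log_self one_lt_two (v + 1)
  apply Nat.log_eq_of_pow_le_of_lt_pow <;> cases c <;> simp [graft, pow_succ] at * <;> omega

lemma graft_inj {c c' : Bool} {v w : ℕ} (h : graft c v = graft c' w) : c = c' ∧ v = w := by
  have hlog : Nat.log 2 (v + 1) = Nat.log 2 (w + 1) := by
    simpa [log_graft] using congrArg (fun n => Nat.log 2 (n + 1)) h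
  have hv₁ := Nat.pow_log_le_self 2 (show v + 1 ≠ 0 by omega)
  have hv₂ := Nat.lt_pow_succ_log_self one_lt_two (v + 1)
  have hw₁ := Nat.pow_log_le_self 2 (show w + 1 ≠ 0 by omega)
  have hw₂ := Nat.lt_pow_succ_log_self one_lt_two (w + 1)
  rw [graft, graft, hlog] at h
  rw [hlog] at hv₁ hv₂
  rw [pow_succ] at hv₂ hw₂
  cases c <;> cases c' <;> simp at h ⊢ <;> omega

lemma graft_lt {h v : ℕ} (c : Bool) (hv : v < 2 ^ (h + 1) - 1) :
    graft c v < 2 ^ (h + 2) - 1 := by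
  have hk : Nat.log 2 (v + 1) ≤ h :=
    Nat.lt_succ_iff.1 (Nat.log_lt_of_lt_pow (Nat.succ_ne_zero v) (by omega))
  have hpow : 2 ^ Nat.log 2 (v + 1) ≤ 2 ^ h := Nat.pow_le_pow_right two_pos hk
  rw [pow_succ, pow_succ] at *
  cases c <;> simp [graft] <;> omega

def IsHeapChild (u v : ℕ) : Prop := v = 2 * u + 1 ∨ v = 2 * u + 2

lemma IsHeapChild.graft {u v : ℕ} (h : IsHeapChild u v) (c : Bool) :
    IsHeapChild (graft c u) (graft c v) := by
  have hlog : Nat.log 2 (v + 1) = Nat.log 2 (u + 1) + 1 := by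
    rw [Nat.log_of_one_lt_of_le one_lt_two (by unfold IsHeapChild at h; omega)]
    congr 2; unfold IsHeapChild at h; omega
  unfold IsHeapChild at h ⊢
  rw [PerfectBinaryTree.graft, PerfectBinaryTree.graft, hlog, pow_succ]
  rcases h with rfl | rfl
  · left; ring
  · right; ring

lemma IsHeapChild.left_unique {u u' v : ℕ} (h : IsHeapChild u v) (h' : IsHeapChild u' v) :
    u = u' := by
  unfold IsHeapChild at h h'; omega

lemma exists_isHeapChild {v : ℕ} (hv : v ≠ 0) : ∃ u, IsHeapChild u v :=
  ⟨(v - 1) / 2, by unfold IsHeapChild; omega⟩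

lemma graft_isHeapChild_graft_iff {c c' : Bool} {u v : ℕ} :
    IsHeapChild (graft c u) (graft c' v) ↔ c = c' ∧ IsHeapChild u v := by
  refine ⟨fun h => ?_, fun ⟨hc, h⟩ => hc ▸ h.graft c⟩
  have hv : v ≠ 0 := by
    rintro rfl
    have := graft_pos c u
    cases c' <;> simp [IsHeapChild, graft_zero] at h <;> omega
  obtain ⟨w, hw⟩ := exists_isHeapChild hv
  obtain ⟨rfl, rfl⟩ := graft_inj ((hw.graft c').left_unique h)
  exact ⟨rfl, hw⟩

lemma isHeapChild_zero_graft_iff {c : Bool} {v : ℕ} : IsHeapChild 0 (graft c v) ↔ v = 0 := by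
  refine ⟨fun h => ?_, fun hv => ?_⟩
  · by_contra hv
    obtain ⟨w, hw⟩ := exists_isHeapChild hv
    exact (graft_pos c w).ne' ((hw.graft c).left_unique h)
  · cases c <;> simp [hv, graft_zero, IsHeapChild]

lemma not_isHeapChild_zero (u : ℕ) : ¬ IsHeapChild u 0 := by
  unfold IsHeapChild; omega

lemma perfectBinaryTree_adj {h : ℕ} {u v : Fin (2 ^ (h + 1) - 1)} :
    (perfectBinaryTree h).Adj u v ↔ IsHeapChild u v ∨ IsHeapChild v u := by
  rw [perfectBinaryTree, fromRel_adj]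
  refine ⟨And.right, fun huv => ⟨?_, huv⟩⟩
  rintro rfl
  simp [IsHeapChild] at huv
  omega

def root (h : ℕ) : Fin (2 ^ (h + 1) - 1) :=
  ⟨0, by have := Nat.one_lt_two_pow (n := h + 1) (by omega); omega⟩

def graftVertex (h : ℕ) :
    Option (Fin (2 ^ (h + 1) - 1) ⊕ Fin (2 ^ (h + 1) - 1)) → Fin (2 ^ (h + 1 + 1) - 1)
  | none => root (h + 1)
  | some (.inl v) => ⟨graft false v, graft_lt false v.2⟩
  | some (.inr v) => ⟨graft true v, graft_lt true v.2⟩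

lemma graftVertex_injective (h : ℕ) : Function.Injective (graftVertex h) := by
  rintro (_ | x | x) (_ | y | y) hxy <;>
    simp only [graftVertex, root, Fin.ext_iff] at hxy <;>
    first
    | rfl
    | exact absurd hxy (graft_pos _ _).ne
    | exact absurd hxy (graft_pos _ _).ne'
    | exact absurd (graft_inj hxy).1 (by decide)
    | rw [Fin.ext (graft_inj hxy).2]

lemma card_option_sum_eq (h : ℕ) :
    Fintype.card (Option (Fin (2 ^ (h + 1) - 1) ⊕ Fin (2 ^ (h + 1) - 1))) =
      Fintype.card (Fin (2 ^ (h + 1 + 1) - 1)) := by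
  have := Nat.one_le_two_pow (n := h + 1)
  simp only [Fintype.card_option, Fintype.card_sum, Fintype.card_fin, pow_succ 2 (h + 1)]
  omega

lemma graftVertex_adj_iff (h : ℕ) (x y) :
    (perfectBinaryTree (h + 1)).Adj (graftVertex h x) (graftVertex h y) ↔
      (rootJoin (perfectBinaryTree h) (perfectBinaryTree h) (root h) (root h)).Adj x y := by
  rcases x with _ | x | x <;> rcases y with _ | y | y <;>
    simp [graftVertex, rootJoin, perfectBinaryTree_adj, root, graft_isHeapChild_graft_iff,
      isHeapChild_zero_graft_iff, not_isHeapChild_zero, Fin.ext_iff]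

noncomputable def rootJoinIso (h : ℕ) :
    rootJoin (perfectBinaryTree h) (perfectBinaryTree h) (root h) (root h) ≃g
      perfectBinaryTree (h + 1) where
  toEquiv := Equiv.ofBijective (graftVertex h)
    ((Fintype.bijective_iff_injective_and_card _).2
      ⟨graftVertex_injective h, card_option_sum_eq h⟩)
  map_rel_iff' := graftVertex_adj_iff h _ _

instance : Unique (Fin (2 ^ (0 + 1) - 1)) := Fin.instUnique

lemma numMaxIndepSets_succ (h : ℕ) :
    (perfectBinaryTree (h + 1)).numMaxIndepSets =
      (perfectBinaryTree h).numMaxIndepSetsMinus (root h) ^ 2 +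
        (perfectBinaryTree (h + 1)).numMaxIndepSetsNotMem (root (h + 1)) := by
  rw [← (rootJoinIso h).numMaxIndepSets_eq, numMaxIndepSets_rootJoin, sq,
    (rootJoinIso h).numMaxIndepSetsNotMem_eq]
  rfl

lemma numMaxIndepSetsNotMem_succ (h : ℕ) :
    (perfectBinaryTree (h + 1)).numMaxIndepSetsNotMem (root (h + 1)) +
        (perfectBinaryTree h).numMaxIndepSetsNotMem (root h) ^ 2 =
      (perfectBinaryTree h).numMaxIndepSets ^ 2 := by
  rw [sq, sq, ← numMaxIndepSetsNotMem_rootJoin, (rootJoinIso h).numMaxIndepSetsNotMem_eq]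
  rfl

lemma numMaxIndepSetsMinus_succ (h : ℕ) :
    (perfectBinaryTree (h + 1)).numMaxIndepSetsMinus (root (h + 1)) =
      (perfectBinaryTree h).numMaxIndepSets ^ 2 := by
  rw [sq, ← numMaxIndepSetsMinus_rootJoin, (rootJoinIso h).numMaxIndepSetsMinus_eq]
  rfl

end PerfectBinaryTree

lemma recurrence_of_rooted_counts {m b d : ℕ → ℕ} (hm₀ : m 0 = 1) (hb₀ : b 0 = 0)
    (hd₀ : d 0 = 1) (hm : ∀ h, m (h + 1) = d h ^ 2 + b (h + 1))
    (hb : ∀ h, b (h + 1) + b h ^ 2 = m h ^ 2) (hd : ∀ h, d (h + 1) = m h ^ 2) :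
    m 1 = 2 ∧ m 2 = 4 ∧ ∀ h, 2 ≤ h →
      (m (h + 1) : ℤ) = 2 * m h * m (h - 2) ^ 4 + m (h - 1) ^ 4 - m (h - 2) ^ 8 := by
  have hb₁ : b 1 = 1 := by simpa [hb₀, hm₀] using hb 0
  have hm₁ : m 1 = 2 := by simp [hm 0, hd₀, hb₁]
  have hb₂ : b 2 = 3 := by simpa [hb₁, hm₁] using hb 1
  refine ⟨hm₁, by simp [hm 1, hd 0, hm₀, hb₂], fun h₂ hh => ?_⟩
  obtain ⟨h, rfl⟩ := Nat.exists_eq_add_of_le' hh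
  simp only [Nat.add_sub_cancel, Nat.add_succ_sub_one]
  have e₁ := hm (h + 2)
  have e₂ := hb (h + 2)
  have e₃ := hd (h + 1)
  have e₄ := hm (h + 1)
  have e₅ := hd h
  zify at e₁ e₂ e₃ e₄ e₅
  rw [e₁, e₃, show (b (h + 3) : ℤ) = m (h + 2) ^ 2 - b (h + 2) ^ 2 by linarith,
    show (b (h + 2) : ℤ) = m (h + 2) - m h ^ 4 by rw [e₄, e₅]; ring]
  ring

/-- Recursive formula for the number of minimal vertex covers of perfect binary trees. -/
theorem numMinimalVertexCovers_perfectBinaryTree_recurrence :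
    (perfectBinaryTree 0).numMinimalVertexCovers = 1 ∧
    (perfectBinaryTree 1).numMinimalVertexCovers = 2 ∧
    (perfectBinaryTree 2).numMinimalVertexCovers = 4 ∧
    ∀ h : ℕ, 2 ≤ h →
      ((perfectBinaryTree (h + 1)).numMinimalVertexCovers : ℤ) =
        2 * ((perfectBinaryTree h).numMinimalVertexCovers : ℤ) *
            ((perfectBinaryTree (h - 2)).numMinimalVertexCovers : ℤ) ^ 4 +
          ((perfectBinaryTree (h - 1)).numMinimalVertexCovers : ℤ) ^ 4 -
          ((perfectBinaryTree (h - 2)).numMinimalVertexCovers : ℤ) ^ 8 := by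
  simp only [SimpleGraph.numMinimalVertexCovers_eq_numMaxIndepSets]
  obtain ⟨h₁, h₂, hrec⟩ := recurrence_of_rooted_counts
    (m := fun h => (perfectBinaryTree h).numMaxIndepSets)
    (b := fun h => (perfectBinaryTree h).numMaxIndepSetsNotMem (PerfectBinaryTree.root h))
    (d := fun h => (perfectBinaryTree h).numMaxIndepSetsMinus (PerfectBinaryTree.root h))
    SimpleGraph.numMaxIndepSets_of_subsingleton
    (SimpleGraph.numMaxIndepSetsNotMem_of_subsingleton _)
    (SimpleGraph.numMaxIndepSetsMinus_of_subsingleton _)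
    PerfectBinaryTree.numMaxIndepSets_succ PerfectBinaryTree.numMaxIndepSetsNotMem_succ
    PerfectBinaryTree.numMaxIndepSetsMinus_succ
  exact ⟨SimpleGraph.numMaxIndepSets_of_subsingleton, h₁, h₂, hrec⟩
end

section
/- Let T be a perfect binary tree of height h > 0. Then the vertex cover number of T equals (2^(h+2) - (3 + (-1)^h))/6; equivalently, α(T) = (2^(h+1) - 2)/3 if h is even and α(T) = (2^(h+1) - 1)/3 if h is odd. -/
variable {V : Type*}

/-!
Cover the tree by the levels `h - 1, h - 3, …`: every edge joins two consecutive levels, so it is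
met. Conversely, the edges from these vertices to their left children are pairwise disjoint, so no
cover is smaller. Level `d` has `2 ^ d` vertices, and the resulting geometric sum is the formula.
-/

namespace SimpleGraph

variable {G : SimpleGraph V}

theorem vertexCoverNumber_eq_card {C : Finset V} (hC : G.IsVertexCover' C)
    (hmin : ∀ D : Finset V, G.IsVertexCover' D → C.card ≤ D.card) :
    G.vertexCoverNumber = C.card :=
  le_antisymm (Nat.sInf_le ⟨C, hC, rfl⟩) <|
    le_csInf ⟨C.card, C, hC, rfl⟩ fun _ ⟨D, hD, hcard⟩ => hcard ▸ hmin D hD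

/-- The edges `{v, f v}`, `v ∈ C`, form a matching, and a cover contains a distinct vertex of
each of them. -/
theorem IsVertexCover'.card_le_of_injOn [DecidableEq V] {C D : Finset V}
    (hD : G.IsVertexCover' D) (f : V → V) (hadj : ∀ v ∈ C, G.Adj v (f v))
    (hinj : Set.InjOn f C) (hout : ∀ v ∈ C, f v ∉ C) : C.card ≤ D.card := by
  refine Finset.card_le_card_of_injOn (fun v => if v ∈ D then v else f v) ?_ ?_
  · intro v hv
    by_cases hvD : v ∈ D
    · simp [hvD]
    · simpa [hvD] using (hD (hadj v hv)).resolve_left hvD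
  · intro v hv w hw hvw
    simp only [Finset.mem_coe] at hv hw
    by_cases hvD : v ∈ D <;> by_cases hwD : w ∈ D <;>
      simp only [hvD, hwD, if_true, if_false] at hvw
    · exact hvw
    · exact absurd (hvw ▸ hv) (hout w hw)
    · exact absurd (hvw ▸ hw) (hout v hv)
    · exact hinj hv hw hvw

end SimpleGraph

open Finset

theorem card_filter_log_two_Ico (P : ℕ → Prop) [DecidablePred P] (n : ℕ) :
    #{k ∈ Ico 1 (2 ^ n) | P (Nat.log 2 k)} = ∑ d ∈ range n, if P d then 2 ^ d else 0 := by
  induction n with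
  | zero => simp
  | succ n ih =>
    have hsplit : Ico 1 (2 ^ (n + 1)) = Ico 1 (2 ^ n) ∪ Ico (2 ^ n) (2 ^ (n + 1)) :=
      (Ico_union_Ico_eq_Ico Nat.one_le_two_pow (Nat.pow_le_pow_right two_pos n.le_succ)).symm
    have hlevel : ∀ k ∈ Ico (2 ^ n) (2 ^ (n + 1)), Nat.log 2 k = n := fun k hk =>
      Nat.log_eq_of_pow_le_of_lt_pow (mem_Ico.1 hk).1 (mem_Ico.1 hk).2
    rw [hsplit, filter_union, card_union_of_disjoint
      ((Ico_disjoint_Ico_consecutive _ _ _).mono (filter_subset _ _) (filter_subset _ _)),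
      ih, sum_range_succ, filter_congr fun k hk => by rw [hlevel k hk]]
    split_ifs with hP
    · rw [filter_true_of_mem fun _ _ => hP, Nat.card_Ico, pow_succ, Nat.mul_two,
        Nat.add_sub_cancel]
    · rw [filter_false_of_mem fun _ _ => hP, card_empty]

theorem heapHeight_eq_add_one {n : ℕ} {u v : Fin n}
    (hv : (v : ℕ) = 2 * u + 1 ∨ (v : ℕ) = 2 * u + 2) : heapHeight v = heapHeight u + 1 := by
  unfold heapHeight
  rw [Nat.log_of_one_lt_of_le one_lt_two (by omega)]
  congr 2
  omega

theorem heapHeight_le {h : ℕ} (v : Fin (2 ^ (h + 1) - 1)) : heapHeight v ≤ h :=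
  Nat.lt_succ_iff.1 <| Nat.log_lt_of_lt_pow (by omega) (by have := v.2; omega)

theorem two_mul_add_one_lt_of_heapHeight_lt {h : ℕ} (v : Fin (2 ^ (h + 1) - 1))
    (hv : heapHeight v < h) : 2 * (v : ℕ) + 1 < 2 ^ (h + 1) - 1 := by
  have := Nat.lt_pow_of_log_lt one_lt_two hv
  have := pow_succ 2 h
  omega

theorem card_filter_heapHeight (P : ℕ → Prop) [DecidablePred P] (h : ℕ) :
    #{v : Fin (2 ^ (h + 1) - 1) | P (heapHeight v)} =
      ∑ d ∈ range (h + 1), if P d then 2 ^ d else 0 := by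
  rw [← card_filter_log_two_Ico]
  refine card_bij (fun v _ => (v : ℕ) + 1) ?_ ?_ ?_
  · intro v hv
    have := v.2
    simp only [mem_filter, mem_univ, true_and] at hv
    exact mem_filter.2 ⟨mem_Ico.2 ⟨by omega, by omega⟩, hv⟩
  · intro v _ w _ hvw
    exact Fin.ext (Nat.add_right_cancel hvw)
  · intro k hk
    obtain ⟨hk, hP⟩ := mem_filter.1 hk
    obtain ⟨hk1, hk2⟩ := mem_Ico.1 hk
    refine ⟨⟨k - 1, by omega⟩, mem_filter.2 ⟨mem_univ _, ?_⟩, by simp only; omega⟩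
    simpa only [heapHeight, Nat.sub_add_cancel hk1] using hP

def oppositeParityLevels (h : ℕ) : Finset (Fin (2 ^ (h + 1) - 1)) :=
  {v | Odd (h + heapHeight v)}

theorem mem_oppositeParityLevels {h : ℕ} {v : Fin (2 ^ (h + 1) - 1)} :
    v ∈ oppositeParityLevels h ↔ heapHeight v % 2 ≠ h % 2 := by
  simp only [oppositeParityLevels, mem_filter, mem_univ, true_and, Nat.odd_iff]
  omega

theorem heapHeight_lt_of_mem_oppositeParityLevels {h : ℕ} {v : Fin (2 ^ (h + 1) - 1)}
    (hv : v ∈ oppositeParityLevels h) : heapHeight v < h := by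
  have := heapHeight_le v
  have := mem_oppositeParityLevels.1 hv
  omega

theorem isVertexCover'_oppositeParityLevels (h : ℕ) :
    (perfectBinaryTree h).IsVertexCover' (oppositeParityLevels h) := by
  intro u v huv
  rw [perfectBinaryTree, SimpleGraph.fromRel_adj] at huv
  rw [mem_oppositeParityLevels, mem_oppositeParityLevels]
  rcases huv.2 with hvu | huv
  · have := heapHeight_eq_add_one hvu
    omega
  · have := heapHeight_eq_add_one huv
    omega

/-- Leaves are sent to themselves. -/
def leftChild {h : ℕ} (v : Fin (2 ^ (h + 1) - 1)) : Fin (2 ^ (h + 1) - 1) :=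
  if hv : 2 * (v : ℕ) + 1 < 2 ^ (h + 1) - 1 then ⟨2 * v + 1, hv⟩ else v

theorem val_leftChild {h : ℕ} {v : Fin (2 ^ (h + 1) - 1)} (hv : heapHeight v < h) :
    (leftChild v : ℕ) = 2 * v + 1 := by
  simp only [leftChild, dif_pos (two_mul_add_one_lt_of_heapHeight_lt v hv)]

theorem card_oppositeParityLevels_le {h : ℕ} {D : Finset (Fin (2 ^ (h + 1) - 1))}
    (hD : (perfectBinaryTree h).IsVertexCover' D) : #(oppositeParityLevels h) ≤ #D := by
  have hval : ∀ v ∈ oppositeParityLevels h, (leftChild v : ℕ) = 2 * v + 1 := fun _ hv =>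
    val_leftChild (heapHeight_lt_of_mem_oppositeParityLevels hv)
  refine hD.card_le_of_injOn leftChild (fun v hv => ?_) (fun v hv w hw hvw => ?_) fun v hv => ?_
  · rw [perfectBinaryTree, SimpleGraph.fromRel_adj]
    refine ⟨fun heq => ?_, Or.inl (Or.inl (hval v hv))⟩
    have := congrArg Fin.val heq
    rw [hval v hv] at this
    omega
  · have := congrArg Fin.val hvw
    rw [hval v hv, hval w hw] at this
    exact Fin.ext (by omega)
  · have := heapHeight_eq_add_one (Or.inl (hval v hv))
    rw [mem_oppositeParityLevels] at hv ⊢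
    omega

theorem vertexCoverNumber_perfectBinaryTree_eq_sum (h : ℕ) :
    (perfectBinaryTree h).vertexCoverNumber =
      ∑ d ∈ range (h + 1), if Odd (h + d) then 2 ^ d else 0 := by
  rw [SimpleGraph.vertexCoverNumber_eq_card (isVertexCover'_oppositeParityLevels h)
    fun _ => card_oppositeParityLevels_le]
  exact card_filter_heapHeight (fun d => Odd (h + d)) h

theorem six_mul_sum_pow_two_odd_add (h : ℕ) :
    6 * ((∑ d ∈ range (h + 1), if Odd (h + d) then 2 ^ d else 0 : ℕ) : ℤ) =
      2 ^ (h + 2) - 3 - (-1) ^ h := by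
  induction h using Nat.twoStepInduction with
  | zero => norm_num
  | one => norm_num [sum_range_succ]
  | more n ih _ =>
    have hodd : ∀ d, Odd (n + 2 + d) ↔ Odd (n + d) := fun d => by
      simp only [Nat.odd_iff]
      omega
    simp only [hodd, sum_range_succ _ (n + 2), sum_range_succ _ (n + 1)]
    rw [if_pos (by rw [Nat.odd_iff]; omega), if_neg (by rw [Nat.odd_iff]; omega)]
    push_cast at ih ⊢
    linear_combination ih

theorem vertexCoverNumber_perfectBinaryTree_general (h : ℕ) :
    6 * ((perfectBinaryTree h).vertexCoverNumber : ℤ) = 2 ^ (h + 2) - (3 + (-1) ^ h) ∧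
    (Even h → 3 * ((perfectBinaryTree h).vertexCoverNumber : ℤ) = 2 ^ (h + 1) - 2) ∧
    (Odd h → 3 * ((perfectBinaryTree h).vertexCoverNumber : ℤ) = 2 ^ (h + 1) - 1) := by
  have hsix := six_mul_sum_pow_two_odd_add h
  rw [← vertexCoverNumber_perfectBinaryTree_eq_sum] at hsix
  refine ⟨by rw [hsix]; ring, fun heven => ?_, fun hodd => ?_⟩
  · rw [heven.neg_one_pow] at hsix
    linarith [pow_succ (2 : ℤ) (h + 1)]
  · rw [hodd.neg_one_pow] at hsix
    linarith [pow_succ (2 : ℤ) (h + 1)]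

/-- Vertex cover number of the perfect binary tree of height . -/
theorem vertexCoverNumber_perfectBinaryTree (h : ℕ) (hh : 0 < h) :
    6 * ((perfectBinaryTree h).vertexCoverNumber : ℤ) = 2 ^ (h + 2) - (3 + (-1) ^ h) ∧
    (Even h → 3 * ((perfectBinaryTree h).vertexCoverNumber : ℤ) = 2 ^ (h + 1) - 2) ∧
    (Odd h → 3 * ((perfectBinaryTree h).vertexCoverNumber : ℤ) = 2 ^ (h + 1) - 1) :=
  vertexCoverNumber_perfectBinaryTree_general h
end

section
/- Let T be a perfect binary tree of height h > 0. Then the matching number of T equals (2^(h+2) - (3 + (-1)^h))/6. -/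
variable {V : Type*}

/-!
Let `C` be the set of vertices whose height has parity different from `h`, i.e. the levels
`h - 1, h - 3, …`. Every edge joins consecutive levels, so `C` is a vertex cover, and sending
each vertex of `C` to its left child matches `C` into the complement of `C`. A matching and a
vertex cover of the same size certify that both are optimal, so the matching number is `#C`,
and `#C` satisfies `#C(h + 1) + #C(h) = 2 ^ (h + 1) - 1`, the size of the tree of height `h`.
-/

open Finset

namespace SimpleGraph

variable {G : SimpleGraph V}

theorem card_le_card_of_isVertexCover' {M : Finset (Sym2 V)} {C : Finset V}
    (hM : (↑M : Set (Sym2 V)) ⊆ G.edgeSet)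
    (hdisj : (↑M : Set (Sym2 V)).Pairwise fun e f => ∀ v : V, v ∈ e → v ∉ f)
    (hC : G.IsVertexCover' C) : #M ≤ #C := by
  refine card_le_card_of_forall_subsingleton (fun e v => v ∈ e) ?_ ?_
  · intro e he
    induction e using Sym2.ind with
    | _ u v =>
      rcases hC (hM he) with hu | hv
      · exact ⟨u, hu, Sym2.mem_mk_left u v⟩
      · exact ⟨v, hv, Sym2.mem_mk_right u v⟩
  · rintro v - e ⟨he, hve⟩ f ⟨hf, hvf⟩
    by_contra hef
    exact hdisj he hf hef v hve hvf

theorem matchingNumber_eq_card_of_isVertexCover' {C : Finset V} (hC : G.IsVertexCover' C)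
    (f : C → V) (hadj : ∀ v : C, G.Adj v (f v)) (hinj : Function.Injective f)
    (hout : ∀ v, f v ∉ C) : G.matchingNumber = #C := by
  classical
  set M : Finset (Sym2 V) := univ.image fun v : C => s(v.1, f v)
  have hM : (↑M : Set (Sym2 V)) ⊆ G.edgeSet := by
    simp only [M, coe_image, coe_univ, Set.image_univ, Set.range_subset_iff]
    exact hadj
  have hdisj : (↑M : Set (Sym2 V)).Pairwise fun e e' => ∀ v : V, v ∈ e → v ∉ e' := by
    simp only [M, coe_image, coe_univ, Set.image_univ]
    rintro _ ⟨v, rfl⟩ _ ⟨w, rfl⟩ hvw x hxv hxw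
    have hne : v ≠ w := fun h => hvw (h ▸ rfl)
    rcases Sym2.mem_iff.mp hxv with rfl | rfl <;> rcases Sym2.mem_iff.mp hxw with hx | hx
    · exact hne (Subtype.ext hx)
    · exact hout w (hx ▸ v.2)
    · exact hout v (hx ▸ w.2)
    · exact hne (hinj hx)
  have hcard : #M = #C := by
    refine (card_image_of_injective _ fun v w h => ?_).trans
      (card_univ.trans (Fintype.card_coe C))
    rcases Sym2.eq_iff.mp h with ⟨h, -⟩ | ⟨h, -⟩
    · exact Subtype.ext h
    · exact absurd (h ▸ v.2) (hout w)
  refine IsGreatest.csSup_eq ⟨⟨M, hM, hdisj, hcard⟩, ?_⟩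
  rintro _ ⟨M', hM', hdisj', rfl⟩
  exact card_le_card_of_isVertexCover' hM' hdisj' hC

end SimpleGraph

theorem filter_log_two_range_two_pow_succ_of_not {P : ℕ → Prop} [DecidablePred P] {n : ℕ}
    (hn : ¬P n) :
    {v ∈ range (2 ^ (n + 1) - 1) | P (Nat.log 2 (v + 1))} =
      {v ∈ range (2 ^ n - 1) | P (Nat.log 2 (v + 1))} := by
  have h2n : 2 ^ (n + 1) = 2 * 2 ^ n := by ring
  ext v
  simp only [mem_filter, mem_range, and_congr_left_iff]
  refine fun hP => ⟨fun hv => ?_, fun hv => by omega⟩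
  by_contra hle
  exact hn (Nat.log_eq_of_pow_le_of_lt_pow (b := 2) (m := n) (n := v + 1)
    (by omega) (by omega) ▸ hP)

theorem six_mul_card_filter_log_two_range (h : ℕ) :
    6 * (#{v ∈ range (2 ^ (h + 1) - 1) | Nat.log 2 (v + 1) % 2 ≠ h % 2} : ℤ) =
      2 ^ (h + 2) - (3 + (-1) ^ h) := by
  induction h with
  | zero => decide
  | succ h ih =>
    have hstep : #{v ∈ range (2 ^ (h + 1 + 1) - 1) | Nat.log 2 (v + 1) % 2 ≠ (h + 1) % 2} +
        #{v ∈ range (2 ^ (h + 1) - 1) | Nat.log 2 (v + 1) % 2 ≠ h % 2} = 2 ^ (h + 1) - 1 := by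
      -- level `h + 1` has the parity of `h + 1`, so only the complement of the count for `h`
      -- among the lower levels remains
      rw [filter_log_two_range_two_pow_succ_of_not (P := (· % 2 ≠ (h + 1) % 2))
          (not_not_intro rfl),
        filter_congr fun v _ => show Nat.log 2 (v + 1) % 2 ≠ (h + 1) % 2 ↔
          ¬(Nat.log 2 (v + 1) % 2 ≠ h % 2) by omega,
        add_comm, card_filter_add_card_filter_not, card_range]
    have hstep' := congrArg (Nat.cast : ℕ → ℤ) hstep
    push_cast [Nat.cast_sub Nat.one_le_two_pow] at hstep'
    linear_combination 6 * hstep' - ih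

theorem heapHeight_child {n : ℕ} {u v : Fin n}
    (huv : (v : ℕ) = 2 * u + 1 ∨ (v : ℕ) = 2 * u + 2) :
    heapHeight v = heapHeight u + 1 := by
  unfold heapHeight
  rw [Nat.log_of_one_lt_of_le one_lt_two (by omega)]
  congr 2
  omega

namespace perfectBinaryTree

variable {h : ℕ}

theorem heapHeight_le (v : Fin (2 ^ (h + 1) - 1)) : heapHeight v ≤ h :=
  Nat.lt_succ_iff.mp (Nat.log_lt_of_lt_pow (by omega) (by omega))

theorem heapHeight_of_adj {u v : Fin (2 ^ (h + 1) - 1)} (huv : (perfectBinaryTree h).Adj u v) :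
    heapHeight v = heapHeight u + 1 ∨ heapHeight u = heapHeight v + 1 := by
  rw [perfectBinaryTree, SimpleGraph.fromRel_adj] at huv
  exact huv.2.imp heapHeight_child heapHeight_child

variable (h) in
def cover : Finset (Fin (2 ^ (h + 1) - 1)) := {v | heapHeight v % 2 ≠ h % 2}

theorem isVertexCover'_cover : (perfectBinaryTree h).IsVertexCover' (cover h) := by
  intro u v huv
  simp only [cover, mem_filter, mem_univ, true_and]
  rcases heapHeight_of_adj huv with e | e <;> omega

theorem two_mul_add_one_lt_of_mem_cover {v : Fin (2 ^ (h + 1) - 1)} (hv : v ∈ cover h) :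
    2 * (v : ℕ) + 1 < 2 ^ (h + 1) - 1 := by
  have hlt : heapHeight v < h :=
    (heapHeight_le v).lt_of_ne fun e => by simp [cover, e] at hv
  have : (v : ℕ) + 1 < 2 ^ h := Nat.lt_pow_of_log_lt one_lt_two hlt
  have : 2 ^ (h + 1) = 2 * 2 ^ h := pow_succ' 2 h
  omega

def leftChild (v : cover h) : Fin (2 ^ (h + 1) - 1) :=
  ⟨2 * v.1 + 1, two_mul_add_one_lt_of_mem_cover v.2⟩

theorem adj_leftChild (v : cover h) : (perfectBinaryTree h).Adj v (leftChild v) := by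
  rw [perfectBinaryTree, SimpleGraph.fromRel_adj]
  exact ⟨fun e => by simp only [leftChild, Fin.ext_iff] at e; omega, .inl (.inl rfl)⟩

theorem leftChild_injective : Function.Injective (leftChild (h := h)) := fun v w e => by
  simp only [leftChild, Fin.ext_iff] at e
  exact Subtype.ext (Fin.ext (by omega))

theorem leftChild_notMem_cover (v : cover h) : leftChild v ∉ cover h := by
  have := heapHeight_child (u := v.1) (v := leftChild v) (.inl rfl)
  have hv := v.2
  simp only [cover, mem_filter, mem_univ, true_and] at hv ⊢
  omega

theorem card_cover :
    #(cover h) = #{v ∈ range (2 ^ (h + 1) - 1) | Nat.log 2 (v + 1) % 2 ≠ h % 2} := by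
  rw [← Nat.Iio_eq_range, ← Fin.map_valEmbedding_univ, filter_map, card_map]
  rfl

end perfectBinaryTree

open perfectBinaryTree in
theorem matchingNumber_perfectBinaryTree_general (h : ℕ) :
    6 * ((perfectBinaryTree h).matchingNumber : ℤ) = 2 ^ (h + 2) - (3 + (-1) ^ h) := by
  rw [SimpleGraph.matchingNumber_eq_card_of_isVertexCover' isVertexCover'_cover leftChild
    adj_leftChild leftChild_injective leftChild_notMem_cover, card_cover]
  exact six_mul_card_filter_log_two_range h

/-- Matching number of the perfect binary tree of height . -/
theorem matchingNumber_perfectBinaryTree (h : ℕ) (hh : 0 < h) :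
    6 * ((perfectBinaryTree h).matchingNumber : ℤ) = 2 ^ (h + 2) - (3 + (-1) ^ h) :=
  matchingNumber_perfectBinaryTree_general h
end

section
/- Let T be a perfect binary tree of height h = 3m + 1 with m ≥ 0. Then the minimum size of a maximal independent set of T equals (8^(m+1) - 1)/7. -/
variable {V : Type*}

/-!
A maximal independent set is an independent dominating set. In heap indexing the trees of
heights `h` and `h + 3` share their top `h + 1` levels, which gives the recursion
`f (h + 3) = f h + 2 ^ (h + 2)` for the minimum size `f`. Adding the whole level `h + 2` to an
independent dominating set of the smaller tree gives one of the larger tree. Conversely, a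
dominating set of the larger tree contains `p` or the leaf `2 * p + 1` for each of the
`2 ^ (h + 2)` vertices `p` of depth `h + 2`, and its part of depth at most `h + 1`, with the
vertices of depth `h + 1` moved to their parents, dominates the smaller tree.
With `f 1 = 1` this gives `f (3 * m + 1) = 1 + 8 + ⋯ + 8 ^ m`.
-/

open Finset

/-- The infinite binary tree in heap indexing; `perfectBinaryTree h` is its restriction to the
first `2 ^ (h + 1) - 1` vertices. -/
def heapTree : SimpleGraph ℕ :=
  SimpleGraph.fromRel fun i j => j = 2 * i + 1 ∨ j = 2 * i + 2

lemma heapTree_adj {i j : ℕ} :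
    heapTree.Adj i j ↔ j = 2 * i + 1 ∨ j = 2 * i + 2 ∨ i = 2 * j + 1 ∨ i = 2 * j + 2 := by
  simp only [heapTree, SimpleGraph.fromRel_adj]
  omega

lemma perfectBinaryTree_adj {h : ℕ} {u v : Fin (2 ^ (h + 1) - 1)} :
    (perfectBinaryTree h).Adj u v ↔ heapTree.Adj u v := by
  simp only [perfectBinaryTree, heapTree, SimpleGraph.fromRel_adj, ne_eq, Fin.ext_iff]

lemma SimpleGraph.isMaximalIndepSet_iff_dominating [DecidableEq V] {G : SimpleGraph V}
    {W : Finset V} :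
    G.IsMaximalIndepSet W ↔ G.IsIndepSet' W ∧ ∀ v, v ∈ W ∨ ∃ u ∈ W, G.Adj u v := by
  refine ⟨fun ⟨hind, hmax⟩ => ⟨hind, fun v => ?_⟩,
    fun ⟨hind, hdom⟩ => ⟨hind, fun D hWD hD => ?_⟩⟩
  · by_contra! hv
    refine hmax (insert v W) (ssubset_insert hv.1) ?_
    simp only [IsIndepSet', mem_insert, forall_eq_or_imp]
    exact ⟨⟨G.irrefl, fun w hw hvw => hv.2 w hw hvw.symm⟩,
      fun u hu => ⟨hv.2 u hu, hind u hu⟩⟩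
  · obtain ⟨v, hvD, hvW⟩ := exists_of_ssubset hWD
    obtain hv | ⟨u, hu, huv⟩ := hdom v
    · exact hvW hv
    · exact hD u (hWD.subset hu) v hvD huv

def IsHeapDominatingSet (h : ℕ) (S : Finset ℕ) : Prop :=
  S ⊆ range (2 ^ (h + 1) - 1) ∧
    ∀ v < 2 ^ (h + 1) - 1, v ∈ S ∨ ∃ u ∈ S, heapTree.Adj u v

/-- Moves a vertex of depth `h + 1` to its parent `(v - 1) / 2`. -/
def clampToHeight (h v : ℕ) : ℕ :=
  if v < 2 ^ (h + 1) - 1 then v else (v - 1) / 2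

/-- Every leaf `2 * p + 1` needs `p` or itself in `S`, and these pairs are disjoint. -/
lemma IsHeapDominatingSet.two_pow_le_card_filter {h : ℕ} {S : Finset ℕ}
    (hS : IsHeapDominatingSet (h + 1) S) : 2 ^ h ≤ (S.filter (2 ^ h - 1 ≤ ·)).card := by
  have hpow : 2 ^ (h + 1) = 2 * 2 ^ h := pow_succ' 2 h
  calc 2 ^ h = (Ico (2 ^ h - 1) (2 ^ (h + 1) - 1)).card := by rw [Nat.card_Ico]; omega
    _ ≤ _ := card_le_card_of_surjOn (clampToHeight h) fun p hp => ?_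
  rw [coe_Ico, Set.mem_Ico] at hp
  obtain hleaf | ⟨u, hu, hadj⟩ := hS.2 (2 * p + 1) (by omega)
  · refine ⟨2 * p + 1, mem_filter.2 ⟨hleaf, by omega⟩, ?_⟩
    rw [clampToHeight, if_neg (by omega)]
    omega
  · have hu' := mem_range.1 (hS.1 hu)
    rw [heapTree_adj] at hadj
    obtain rfl : u = p := by omega
    exact ⟨u, mem_filter.2 ⟨hu, hp.1⟩, if_pos hp.2⟩

lemma isHeapDominatingSet_image_clampToHeight {h : ℕ} {S : Finset ℕ}
    (hS : ∀ v < 2 ^ (h + 1) - 1, v ∈ S ∨ ∃ u ∈ S, heapTree.Adj u v) :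
    IsHeapDominatingSet h ((S.filter (· < 2 ^ (h + 2) - 1)).image (clampToHeight h)) := by
  have hpow : 2 ^ (h + 2) = 2 * 2 ^ (h + 1) := by ring
  refine ⟨fun w hw => ?_, fun v hv => ?_⟩
  · obtain ⟨v, hv, rfl⟩ := mem_image.1 hw
    rw [mem_filter] at hv
    rw [mem_range, clampToHeight]
    split_ifs <;> omega
  obtain hv' | ⟨u, hu, hadj⟩ := hS v hv
  · exact Or.inl (mem_image.2 ⟨v, mem_filter.2 ⟨hv', by omega⟩, if_pos hv⟩)
  have hadj' := heapTree_adj.1 hadj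
  have hu' : u < 2 ^ (h + 2) - 1 := by omega
  by_cases hlow : u < 2 ^ (h + 1) - 1
  · exact Or.inr ⟨u, mem_image.2 ⟨u, mem_filter.2 ⟨hu, hu'⟩, if_pos hlow⟩, hadj⟩
  · refine Or.inl (mem_image.2 ⟨u, mem_filter.2 ⟨hu, hu'⟩, ?_⟩)
    rw [clampToHeight, if_neg hlow]
    omega

lemma IsHeapDominatingSet.exists_card_add_le {h : ℕ} {S : Finset ℕ}
    (hS : IsHeapDominatingSet (h + 3) S) :
    ∃ S', IsHeapDominatingSet h S' ∧ S'.card + 2 ^ (h + 2) ≤ S.card := by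
  have hpow : 2 ^ (h + 3 + 1) = 8 * 2 ^ (h + 1) := by ring
  refine ⟨_, isHeapDominatingSet_image_clampToHeight fun v hv => hS.2 v (by omega), ?_⟩
  have hsplit := card_filter_add_card_filter_not (s := S) (· < 2 ^ (h + 2) - 1)
  simp only [not_lt] at hsplit
  have hdeep := IsHeapDominatingSet.two_pow_le_card_filter (h := h + 2) hS
  have himage := card_image_le (s := S.filter (· < 2 ^ (h + 2) - 1)) (f := clampToHeight h)
  omega

lemma IsHeapDominatingSet.sum_pow_eight_le_card {m : ℕ} {S : Finset ℕ}
    (hS : IsHeapDominatingSet (3 * m + 1) S) : ∑ k ∈ range (m + 1), 8 ^ k ≤ S.card := by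
  induction m generalizing S with
  | zero =>
    obtain h0 | ⟨u, hu, -⟩ := hS.2 0 (by norm_num)
    · simpa using card_pos.2 ⟨0, h0⟩
    · simpa using card_pos.2 ⟨u, hu⟩
  | succ m ih =>
    obtain ⟨S', hS', hcard⟩ := IsHeapDominatingSet.exists_card_add_le (h := 3 * m + 1) hS
    have hpow : 8 ^ (m + 1) = 2 ^ (3 * m + 1 + 2) := by
      rw [show 3 * m + 1 + 2 = 3 * (m + 1) by ring, pow_mul]
      norm_num
    rw [sum_range_succ, hpow]
    have := ih hS'
    omega

lemma IsHeapDominatingSet.union_Ico {h : ℕ} {S : Finset ℕ} (hS : IsHeapDominatingSet h S) :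
    IsHeapDominatingSet (h + 3) (S ∪ Ico (2 ^ (h + 2) - 1) (2 ^ (h + 3) - 1)) := by
  have hpow₁ : 2 ^ (h + 2) = 2 * 2 ^ (h + 1) := by ring
  have hpow₂ : 2 ^ (h + 3) = 4 * 2 ^ (h + 1) := by ring
  refine ⟨union_subset (hS.1.trans (range_subset_range.2 (by omega))) fun v hv => ?_,
    fun v hv => ?_⟩
  · rw [mem_Ico] at hv
    rw [mem_range]
    omega
  by_cases hlow : v < 2 ^ (h + 1) - 1
  · obtain hv' | ⟨u, hu, hadj⟩ := hS.2 v hlow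
    · exact Or.inl (mem_union_left _ hv')
    · exact Or.inr ⟨u, mem_union_left _ hu, hadj⟩
  simp only [mem_union, mem_Ico, heapTree_adj]
  by_cases hmid : v < 2 ^ (h + 2) - 1
  · exact Or.inr ⟨2 * v + 1, Or.inr (by omega), by omega⟩
  by_cases hlevel : v < 2 ^ (h + 3) - 1
  · exact Or.inl (Or.inr (by omega))
  · exact Or.inr ⟨(v - 1) / 2, Or.inr (by omega), by omega⟩

lemma isIndepSet'_union_Ico {h : ℕ} {S : Finset ℕ} (hS : S ⊆ range (2 ^ (h + 1) - 1))
    (hind : heapTree.IsIndepSet' S) :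
    heapTree.IsIndepSet' (S ∪ Ico (2 ^ (h + 2) - 1) (2 ^ (h + 3) - 1)) := by
  have hpow₁ : 2 ^ (h + 2) = 2 * 2 ^ (h + 1) := by ring
  have hpow₂ : 2 ^ (h + 3) = 4 * 2 ^ (h + 1) := by ring
  intro u hu v hv hadj
  rw [mem_union, mem_Ico] at hu hv
  rcases hu with hu | hu <;> rcases hv with hv | hv
  · exact hind u hu v hv hadj
  all_goals rw [heapTree_adj] at hadj
  · have := mem_range.1 (hS hu)
    omega
  · have := mem_range.1 (hS hv)
    omega
  · omega

lemma card_union_Ico {h : ℕ} {S : Finset ℕ} (hS : S ⊆ range (2 ^ (h + 1) - 1)) :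
    (S ∪ Ico (2 ^ (h + 2) - 1) (2 ^ (h + 3) - 1)).card = S.card + 2 ^ (h + 2) := by
  have hpow₁ : 2 ^ (h + 2) = 2 * 2 ^ (h + 1) := by ring
  have hpow₂ : 2 ^ (h + 3) = 4 * 2 ^ (h + 1) := by ring
  have hdisj : Disjoint S (Ico (2 ^ (h + 2) - 1) (2 ^ (h + 3) - 1)) :=
    disjoint_left.2 fun v hv hv' => by
      have := mem_range.1 (hS hv)
      rw [mem_Ico] at hv'
      omega
  rw [card_union_of_disjoint hdisj, Nat.card_Ico]
  omega

/-- The witness is the set of vertices of depth divisible by `3`. -/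
lemma exists_isIndepSet'_isHeapDominatingSet_card_eq (m : ℕ) :
    ∃ S, heapTree.IsIndepSet' S ∧ IsHeapDominatingSet (3 * m + 1) S ∧
      S.card = ∑ k ∈ range (m + 1), 8 ^ k := by
  induction m with
  | zero =>
    refine ⟨{0}, ?_, ⟨by simp, fun v hv => ?_⟩, rfl⟩
    · simp [SimpleGraph.IsIndepSet']
    · simp only [mem_singleton, heapTree_adj, exists_eq_left]
      omega
  | succ m ih =>
    obtain ⟨S, hind, hS, hcard⟩ := ih
    have hpow : 2 ^ (3 * m + 1 + 2) = 8 ^ (m + 1) := by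
      rw [show 3 * m + 1 + 2 = 3 * (m + 1) by ring, pow_mul]
      norm_num
    exact ⟨_, isIndepSet'_union_Ico hS.1 hind, hS.union_Ico,
      by rw [card_union_Ico hS.1, hcard, hpow, sum_range_succ _ (m + 1)]⟩

lemma isMaximalIndepSet_perfectBinaryTree_iff {h : ℕ} {W : Finset (Fin (2 ^ (h + 1) - 1))} :
    (perfectBinaryTree h).IsMaximalIndepSet W ↔
      heapTree.IsIndepSet' (W.map Fin.valEmbedding) ∧
        IsHeapDominatingSet h (W.map Fin.valEmbedding) := by
  simp only [SimpleGraph.isMaximalIndepSet_iff_dominating, SimpleGraph.IsIndepSet',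
    forall_mem_map, Fin.valEmbedding_apply, perfectBinaryTree_adj]
  refine and_congr_right fun _ => ⟨fun hdom => ⟨fun v hv => ?_, fun v hv => ?_⟩, ?_⟩
  · obtain ⟨a, -, rfl⟩ := mem_map.1 hv
    exact mem_range.2 a.2
  · obtain hv' | ⟨u, hu, huv⟩ := hdom ⟨v, hv⟩
    · exact Or.inl (mem_map_of_mem _ hv')
    · exact Or.inr ⟨u, mem_map_of_mem _ hu, huv⟩
  · rintro ⟨-, hdom⟩ v
    obtain hv | ⟨u, hu, huv⟩ := hdom v v.2
    · exact Or.inl ((mem_map' _).1 hv)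
    · obtain ⟨a, ha, rfl⟩ := mem_map.1 hu
      exact Or.inr ⟨a, ha, huv⟩

lemma minMaximalIndepSetSize_perfectBinaryTree_eq_sum (m : ℕ) :
    (perfectBinaryTree (3 * m + 1)).minMaximalIndepSetSize = ∑ k ∈ range (m + 1), 8 ^ k := by
  obtain ⟨S, hind, hS, hcard⟩ := exists_isIndepSet'_isHeapDominatingSet_card_eq m
  have hW : (perfectBinaryTree (3 * m + 1)).IsMaximalIndepSet
      (S.attachFin fun v hv => mem_range.1 (hS.1 hv)) := by
    rw [isMaximalIndepSet_perfectBinaryTree_iff, map_valEmbedding_attachFin]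
    exact ⟨hind, hS⟩
  refine le_antisymm (Nat.sInf_le ⟨_, hW, by rw [card_attachFin, hcard]⟩)
    (le_csInf ⟨_, _, hW, rfl⟩ ?_)
  rintro _ ⟨W, hW, rfl⟩
  simpa using (isMaximalIndepSet_perfectBinaryTree_iff.1 hW).2.sum_pow_eight_le_card

/-- For a perfect binary tree of height h = 3m+1, the minimum size of a
maximal independent set is (8^(m+1) - 1)/7. -/
theorem minMaximalIndepSetSize_perfectBinaryTree_height_three_mul_add_one (m : ℕ) :
    7 * (perfectBinaryTree (3 * m + 1)).minMaximalIndepSetSize = 8 ^ (m + 1) - 1 := by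
  have hgeom := geom_sum_mul_add 7 (m + 1)
  norm_num at hgeom
  rw [minMaximalIndepSetSize_perfectBinaryTree_eq_sum]
  omega
end

section
/- Let T be a perfect binary tree of height h = 3m + 2 with m ≥ 0. Then the minimum size of a maximal independent set of T equals 2·(8^(m+1) - 1)/7. -/
variable {V : Type*}

/-!
Levels `1, 4, 7, …, 3m + 1` form an independent set dominating the tree of height `3m + 2`,
of size `∑ⱼ 2^(3j+1) = 2 (8^(m+1) - 1) / 7`. Conversely, the closed neighbourhoods of the left
children of these vertices are pairwise disjoint, so any dominating set, in particular any
maximal independent set, has at least as many vertices.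
-/

open Finset

namespace SimpleGraph

variable {G : SimpleGraph V} {W : Finset V}

def IsDominating (G : SimpleGraph V) (W : Finset V) : Prop :=
  ∀ v, v ∈ W ∨ ∃ u ∈ W, G.Adj u v

theorem IsMaximalIndepSet.isDominating (hW : G.IsMaximalIndepSet W) : G.IsDominating W := by
  classical
  intro v
  by_contra! hv
  refine hW.2 (insert v W) (ssubset_insert hv.1) fun a ha b hb hab => ?_
  rw [mem_insert] at ha hb
  rcases ha with rfl | ha <;> rcases hb with rfl | hb
  · exact G.loopless.irrefl _ hab
  · exact hv.2 b hb hab.symm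
  · exact hv.2 a ha hab
  · exact hW.1 a ha b hb hab

theorem IsIndepSet'.isMaximalIndepSet (hind : G.IsIndepSet' W) (hdom : G.IsDominating W) :
    G.IsMaximalIndepSet W := by
  refine ⟨hind, fun D hWD hD => ?_⟩
  obtain ⟨x, hxD, hxW⟩ := exists_of_ssubset hWD
  rcases hdom x with hx | ⟨u, huW, hux⟩
  · exact hxW hx
  · exact hD u (hWD.subset huW) x hxD hux

/-- `f` witnesses that the closed neighbourhoods of the chosen vertices `p i` are pairwise
disjoint, so a dominating set needs a separate vertex in each of them. -/
theorem IsDominating.card_le {ι : Type*} (hW : G.IsDominating W) (f : V → ι) (L : Finset ι)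
    (hL : ∀ i ∈ L, ∃ p, ∀ w, (w = p ∨ G.Adj w p) → f w = i) : #L ≤ #W :=
  card_le_card_of_surjOn f fun i hi => by
    obtain ⟨p, hp⟩ := hL i hi
    rcases hW p with hpW | ⟨u, huW, hup⟩
    · exact ⟨p, hpW, hp p (.inl rfl)⟩
    · exact ⟨u, huW, hp u (.inr hup)⟩

theorem minMaximalIndepSetSize_eq_card (hW : G.IsMaximalIndepSet W)
    (hle : ∀ W', G.IsMaximalIndepSet W' → #W ≤ #W') : G.minMaximalIndepSetSize = #W :=
  IsLeast.csInf_eq ⟨⟨W, hW, rfl⟩, by rintro _ ⟨W', hW', rfl⟩; exact hle W' hW'⟩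

end SimpleGraph

section HeapIndexing

variable {n : ℕ}

theorem heapHeight_eq_iff {v : Fin n} {t : ℕ} :
    heapHeight v = t ↔ 2 ^ t ≤ (v : ℕ) + 1 ∧ (v : ℕ) + 1 < 2 ^ (t + 1) :=
  Nat.log_eq_iff (.inr ⟨one_lt_two, by omega⟩)

theorem heapHeight_eq_add_one_of_div_two {u v : Fin n} (huv : ((v : ℕ) + 1) / 2 = u + 1) :
    heapHeight v = heapHeight u + 1 := by
  have hpos : 0 < heapHeight v := Nat.log_pos one_lt_two (by omega)
  have hdiv : heapHeight u = heapHeight v - 1 := by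
    rw [heapHeight, ← huv, Nat.log_div_base]; rfl
  omega

end HeapIndexing

namespace perfectBinaryTree

variable {h : ℕ}

theorem adj_iff {u v : Fin (2 ^ (h + 1) - 1)} :
    (perfectBinaryTree h).Adj u v ↔
      ((v : ℕ) + 1) / 2 = u + 1 ∨ ((u : ℕ) + 1) / 2 = v + 1 := by
  rw [perfectBinaryTree, SimpleGraph.fromRel_adj, ne_eq, Fin.ext_iff]
  omega

theorem two_mul_add_one_lt {v : Fin (2 ^ (h + 1) - 1)} (hv : heapHeight v < h) :
    2 * (v : ℕ) + 1 < 2 ^ (h + 1) - 1 := by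
  have hlt : (v : ℕ) + 1 < 2 ^ (heapHeight v + 1) := Nat.lt_pow_succ_log_self one_lt_two _
  have hpow : 2 ^ (heapHeight v + 1) ≤ 2 ^ h := Nat.pow_le_pow_right two_pos hv
  have := pow_succ 2 h
  omega

def levelsOneModThree (h : ℕ) : Finset (Fin (2 ^ (h + 1) - 1)) :=
  {v | heapHeight v % 3 = 1}

theorem isIndepSet'_levelsOneModThree (h : ℕ) :
    (perfectBinaryTree h).IsIndepSet' (levelsOneModThree h) := by
  intro u hu v hv huv
  simp only [levelsOneModThree, mem_filter, mem_univ, true_and] at hu hv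
  rcases adj_iff.1 huv with hvu | huv
  · have := heapHeight_eq_add_one_of_div_two hvu
    omega
  · have := heapHeight_eq_add_one_of_div_two huv
    omega

theorem isDominating_levelsOneModThree (hh : h % 3 = 2) :
    (perfectBinaryTree h).IsDominating (levelsOneModThree h) := by
  intro v
  simp only [levelsOneModThree, mem_filter, mem_univ, true_and]
  have hvh := heapHeight_le v
  by_cases h1 : heapHeight v % 3 = 1
  · exact .inl h1
  right
  by_cases h0 : heapHeight v % 3 = 0
  · let c : Fin (2 ^ (h + 1) - 1) := ⟨2 * v + 1, two_mul_add_one_lt (by omega)⟩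
    have hcv : ((c : ℕ) + 1) / 2 = v + 1 := by simp only [c]; omega
    have := heapHeight_eq_add_one_of_div_two hcv
    exact ⟨c, by omega, adj_iff.2 (.inr hcv)⟩
  · have hv0 : (v : ℕ) ≠ 0 := fun hv => by
      simp [heapHeight, hv] at h0
    let p : Fin (2 ^ (h + 1) - 1) := ⟨((v : ℕ) + 1) / 2 - 1, by have := v.isLt; omega⟩
    have hvp : ((v : ℕ) + 1) / 2 = p + 1 := by simp only [p]; omega
    have := heapHeight_eq_add_one_of_div_two hvp
    exact ⟨p, by omega, adj_iff.2 (.inl hvp)⟩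

/-- Sends each vertex of height `≡ 1, 2, 0 (mod 3)` to its ancestor `0, 1, 2` levels up. -/
def ancestorOfHeightOneModThree (v : Fin (2 ^ (h + 1) - 1)) : Fin (2 ^ (h + 1) - 1) :=
  ⟨((v : ℕ) + 1) / 2 ^ ((heapHeight v + 2) % 3) - 1, by
    have := v.isLt; have := Nat.div_le_self ((v : ℕ) + 1) (2 ^ ((heapHeight v + 2) % 3)); omega⟩

theorem ancestorOfHeightOneModThree_eq {v w : Fin (2 ^ (h + 1) - 1)}
    (hv : heapHeight v % 3 = 1) (hvh : heapHeight v < h)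
    (hw : w = ⟨2 * v + 1, two_mul_add_one_lt hvh⟩ ∨
      (perfectBinaryTree h).Adj w ⟨2 * v + 1, two_mul_add_one_lt hvh⟩) :
    ancestorOfHeightOneModThree w = v := by
  set c : Fin (2 ^ (h + 1) - 1) := ⟨2 * v + 1, two_mul_add_one_lt hvh⟩
  have hcv : ((c : ℕ) + 1) / 2 = v + 1 := by simp only [c]; omega
  have hc := heapHeight_eq_add_one_of_div_two hcv
  rw [Fin.ext_iff]
  simp only [ancestorOfHeightOneModThree]
  rcases hw with rfl | hw
  · rw [show (heapHeight c + 2) % 3 = 1 by omega, pow_one]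
    omega
  rcases adj_iff.1 hw with hcw | hwc
  · have hwv : w = v := by rw [Fin.ext_iff]; omega
    subst hwv
    rw [show (heapHeight w + 2) % 3 = 0 by omega, pow_zero, Nat.div_one]
    omega
  · have := heapHeight_eq_add_one_of_div_two hwc
    rw [show (heapHeight w + 2) % 3 = 2 by omega]
    omega

theorem card_levelsOneModThree_le_of_isDominating (hh : h % 3 ≠ 1) {W : Finset (Fin (2 ^ (h + 1) - 1))}
    (hW : (perfectBinaryTree h).IsDominating W) : #(levelsOneModThree h) ≤ #W := by
  refine hW.card_le ancestorOfHeightOneModThree _ fun v hv => ?_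
  simp only [levelsOneModThree, mem_filter, mem_univ, true_and] at hv
  have hvh : heapHeight v < h := lt_of_le_of_ne (heapHeight_le v) (by omega)
  exact ⟨_, fun w hw => ancestorOfHeightOneModThree_eq hv hvh hw⟩

theorem card_heapHeight_eq {t : ℕ} (ht : t ≤ h) :
    #{v : Fin (2 ^ (h + 1) - 1) | heapHeight v = t} = 2 ^ t := by
  have hpow : 2 ^ (t + 1) ≤ 2 ^ (h + 1) := Nat.pow_le_pow_right two_pos (by omega)
  calc #{v : Fin (2 ^ (h + 1) - 1) | heapHeight v = t}
      = #(Ico (2 ^ t - 1) (2 ^ (t + 1) - 1)) := by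
        refine card_nbij (fun v => (v : ℕ)) (fun v hv => ?_) Fin.val_injective.injOn
          (fun x hx => ?_)
        · simp only [coe_filter, mem_univ, true_and, Set.mem_ofPred_eq,
            heapHeight_eq_iff] at hv
          simp only [coe_Ico, Set.mem_Ico]
          omega
        · simp only [coe_Ico, Set.mem_Ico] at hx
          refine ⟨⟨x, by omega⟩, ?_, rfl⟩
          simp only [coe_filter, mem_univ, true_and, Set.mem_ofPred_eq, heapHeight_eq_iff]
          omega
    _ = 2 ^ t := by rw [Nat.card_Ico, pow_succ]; have := Nat.one_le_two_pow (n := t); omega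

theorem card_filter_heapHeight (P : ℕ → Prop) [DecidablePred P] :
    #{v : Fin (2 ^ (h + 1) - 1) | P (heapHeight v)} = ∑ t ∈ range (h + 1) with P t, 2 ^ t := by
  rw [card_eq_sum_card_fiberwise (f := heapHeight) (t := {t ∈ range (h + 1) | P t})]
  · refine sum_congr rfl fun t ht => ?_
    rw [mem_filter, mem_range] at ht
    rw [filter_filter, ← card_heapHeight_eq (Nat.lt_succ_iff.1 ht.1)]
    congr 1
    ext v
    simp only [mem_filter, mem_univ, true_and]
    exact ⟨And.right, fun hv => ⟨hv ▸ ht.2, hv⟩⟩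
  · intro v hv
    simp only [coe_filter, mem_univ, true_and, Set.mem_ofPred_eq, mem_range] at hv ⊢
    exact ⟨Nat.lt_succ_of_le (heapHeight_le v), hv⟩

theorem card_levelsOneModThree (h : ℕ) :
    #(levelsOneModThree h) = ∑ t ∈ range (h + 1) with t % 3 = 1, 2 ^ t :=
  card_filter_heapHeight (· % 3 = 1)

end perfectBinaryTree

theorem seven_mul_sum_two_pow_mod_three_eq_one (m : ℕ) :
    7 * ∑ t ∈ range (3 * m + 3) with t % 3 = 1, 2 ^ t = 2 * (8 ^ (m + 1) - 1) := by
  induction m with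
  | zero => decide
  | succ m ih =>
    rw [sum_filter] at ih ⊢
    rw [show 3 * (m + 1) + 3 = 3 * m + 3 + 1 + 1 + 1 by ring, sum_range_succ, sum_range_succ,
      sum_range_succ, if_neg (by omega), if_pos (by omega), if_neg (by omega)]
    have h8 : 2 ^ (3 * m + 4) = 2 * 8 ^ (m + 1) := by
      rw [show (8 : ℕ) = 2 ^ 3 by rfl, ← pow_mul, ← pow_succ']; ring_nf
    have := Nat.one_le_pow (m + 1) 8 (by norm_num)
    rw [pow_succ 8 (m + 1)]
    omega

/-- For a perfect binary tree of height h = 3m+2, the minimum size of a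
maximal independent set is 2*(8^(m+1) - 1)/7. -/
theorem minMaximalIndepSetSize_perfectBinaryTree_height_three_mul_add_two (m : ℕ) :
    7 * (perfectBinaryTree (3 * m + 2)).minMaximalIndepSetSize = 2 * (8 ^ (m + 1) - 1) := by
  have hh : (3 * m + 2) % 3 = 2 := by omega
  have hmax := (perfectBinaryTree.isIndepSet'_levelsOneModThree _).isMaximalIndepSet
    (perfectBinaryTree.isDominating_levelsOneModThree hh)
  rw [SimpleGraph.minMaximalIndepSetSize_eq_card hmax fun W hW =>
      perfectBinaryTree.card_levelsOneModThree_le_of_isDominating (by omega) hW.isDominating,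
    perfectBinaryTree.card_levelsOneModThree]
  exact seven_mul_sum_two_pow_mod_three_eq_one m
end
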